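/- arXiv:1409.1136 — 6 statements merged into one kernel-verified Lean document; each statement's English description precedes it below -/
import Mathlib

section
/- For every weak class memory automaton there exists a class counting automaton recognizing the same data language. -/
/-- A class memory automaton over alphabet `S` and data set `D`, with state set `Q`. -/
structure CMA (Q S D : Type) where
  init : Q
  δ : Q → S → Option Q → Set Q
  FL : Set Q
  FG : Set Q
  sub : FG ⊆ FL

namespace CMA

variable {Q S D : Type} [DecidableEq D]

/-- One transition step: on input `(a,d)`, from `(q,f)` move to `(q', f[d ↦ q'])`
whenever `q' ∈ δ(q, a, f d)`. -/
def Step (A : CMA Q S D) (c : Q × (D → Option Q)) (x : S × D) (c' : Q × (D → Option Q)) : Prop :=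
  c'.1 ∈ A.δ c.1 x.1 (c.2 x.2) ∧ c'.2 = Function.update c.2 x.2 (some c'.1)

/-- A run on a data word, from a configuration to a configuration. -/
inductive Run (A : CMA Q S D) : (Q × (D → Option Q)) → List (S × D) → (Q × (D → Option Q)) → Prop
  | nil (c) : Run A c [] c
  | cons {c x c' w c''} : A.Step c x c' → Run A c' w c'' → Run A c (x :: w) c''

def initConfig (A : CMA Q S D) : Q × (D → Option Q) := (A.init, fun _ => none)

/-- Acceptance: some run from the initial configuration ends in a globally accepting
state with every remembered data value in a locally accepting state. -/
def Accepts (A : CMA Q S D) (w : List (S × D)) : Prop :=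
  ∃ q f, A.Run A.initConfig w (q, f) ∧ q ∈ A.FG ∧ ∀ d s, f d = some s → s ∈ A.FL

def Lang (A : CMA Q S D) : Set (List (S × D)) := {w | A.Accepts w}

/-- A CMA is weak if every state is locally accepting. -/
def Weak (A : CMA Q S D) : Prop := A.FL = Set.univ

/-- A CMA is deterministic if every value of the transition map is a singleton. -/
def Deterministic (A : CMA Q S D) : Prop := ∀ q a s, ∃ q', A.δ q a s = {q'}

end CMA

/-- Comparison operators used in constraints of class counting automata. -/
inductive CmpOp | eq | ne | lt | gt

/-- Satisfaction of a constraint `(op, e)` by a counter value `n`. -/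
def CmpOp.sat : CmpOp → ℕ → ℕ → Prop
  | .eq, n, e => n = e
  | .ne, n, e => n ≠ e
  | .lt, n, e => n < e
  | .gt, n, e => n > e

/-- Bag operations: increment (`↑⁺`) or reset (`↓`). -/
inductive BagOp | incr | reset

def BagOp.apply : BagOp → ℕ → ℕ → ℕ
  | .incr, old, m => old + m
  | .reset, _, m => m

/-- A class counting automaton with state set `Q` over alphabet `S`:
a finite transition relation `Δ ⊆ Q × Σ × C × {↑⁺,↓} × ℕ × Q`, initial state, final states. -/
structure CCA (Q S : Type) where
  Δ : Set (Q × S × (CmpOp × ℕ) × BagOp × ℕ × Q)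
  fin : Δ.Finite
  init : Q
  F : Set Q

namespace CCA

variable {Q S D : Type} [DecidableEq D]

/-- One step of a CCA on input `(a,d)`: a transition `(q,a,c,π,m,q')` applies if the
bag value of `d` satisfies `c`, and the bag is updated at `d` according to `π` and `m`. -/
def Step (B : CCA Q S) (c : Q × (D → ℕ)) (x : S × D) (c' : Q × (D → ℕ)) : Prop :=
  ∃ cmp e π m, (c.1, x.1, (cmp, e), π, m, c'.1) ∈ B.Δ ∧ cmp.sat (c.2 x.2) e ∧
    c'.2 = Function.update c.2 x.2 (π.apply (c.2 x.2) m)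

inductive Run (B : CCA Q S) : (Q × (D → ℕ)) → List (S × D) → (Q × (D → ℕ)) → Prop
  | nil (c) : Run B c [] c
  | cons {c x c' w c''} : B.Step c x c' → Run B c' w c'' → Run B c (x :: w) c''

/-- Acceptance is by final state, starting from the empty bag. -/
def Accepts (B : CCA Q S) (w : List (S × D)) : Prop :=
  ∃ q h, B.Run ((B.init, fun _ => 0) : Q × (D → ℕ)) w (q, h) ∧ q ∈ B.F

def Lang (B : CCA Q S) (D : Type) [DecidableEq D] : Set (List (S × D)) := {w | B.Accepts w}

/-- A CCA is deterministic if for each state, letter and counter value there is exactly one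
applicable transition (the constraints from each `(q,a)` partition `ℕ`). -/
def Deterministic (B : CCA Q S) : Prop :=
  ∀ q a n, ∃! t : (CmpOp × ℕ) × BagOp × ℕ × Q, (q, a, t) ∈ B.Δ ∧ t.1.1.sat n t.1.2

end CCA

/-! A CCA can store in the bag of each data value a code of its class memory, with `0` for `⊥`:
every CMA transition then becomes a test for equality with the code of the remembered state
followed by a reset to the code of the new one. Acceptance of the CCA ignores the bags, which is
exactly acceptance of a weak CMA, where every remembered state is locally accepting. -/

open Encodable

namespace CMA

variable {Q S D : Type}

theorem Weak.accepts_iff [DecidableEq D] {A : CMA Q S D} (hA : A.Weak) {w : List (S × D)} :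
    A.Accepts w ↔ ∃ q f, A.Run A.initConfig w (q, f) ∧ q ∈ A.FG := by
  simp only [Accepts, show A.FL = Set.univ from hA, Set.mem_univ, implies_true, and_true]

variable [Encodable Q]

def toCCA [Finite Q] [Finite S] (A : CMA Q S D) : CCA Q S where
  Δ := (fun t : Q × S × Option Q × Q =>
      (t.1, t.2.1, (CmpOp.eq, encode t.2.2.1), BagOp.reset, encode (some t.2.2.2), t.2.2.2)) ''
      {t | t.2.2.2 ∈ A.δ t.1 t.2.1 t.2.2.1}
  fin := (Set.toFinite _).image _
  init := A.init
  F := A.FG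

variable [Finite Q] [Finite S] [DecidableEq D] (A : CMA Q S D)

theorem toCCA_step_iff {q q' : Q} {f : D → Option Q} {x : S × D} {h : D → ℕ} :
    A.toCCA.Step (q, encode ∘ f) x (q', h) ↔
      A.Step (q, f) x (q', Function.update f x.2 (some q')) ∧
        h = encode ∘ Function.update f x.2 (some q') := by
  simp only [CCA.Step, Step, toCCA, Set.mem_image, Set.mem_ofPred_eq, Prod.exists,
    Prod.mk.injEq, Function.comp_update, BagOp.apply, and_true]
  constructor
  · rintro ⟨_, _, _, _, ⟨_, _, p, _, hδ, rfl, rfl, ⟨rfl, rfl⟩, rfl, rfl, rfl⟩, hsat, rfl⟩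
    obtain rfl : f x.2 = p := encode_injective hsat
    exact ⟨hδ, rfl⟩
  · rintro ⟨hδ, rfl⟩
    exact ⟨_, _, _, _, ⟨_, _, _, _, hδ, rfl, rfl, ⟨rfl, rfl⟩, rfl, rfl, rfl⟩, rfl, rfl⟩

theorem toCCA_run_iff {w : List (S × D)} {q q' : Q} {f : D → Option Q} {h : D → ℕ} :
    A.toCCA.Run (q, encode ∘ f) w (q', h) ↔ ∃ f', A.Run (q, f) w (q', f') ∧ h = encode ∘ f' := by
  induction w generalizing q f with
  | nil =>
    constructor
    · rintro ⟨⟩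
      exact ⟨f, .nil _, rfl⟩
    · rintro ⟨f', ⟨⟩, rfl⟩
      exact .nil _
  | cons x w ih =>
    constructor
    · rintro (_ | @⟨_, _, ⟨p, g⟩, _, _, hstep, hrun⟩)
      obtain ⟨hstep', rfl⟩ := A.toCCA_step_iff.mp hstep
      obtain ⟨f', hrun', rfl⟩ := ih.mp hrun
      exact ⟨f', .cons hstep' hrun', rfl⟩
    · rintro ⟨f', (_ | @⟨_, _, ⟨p, g⟩, _, _, hstep, hrun⟩), rfl⟩
      obtain rfl : g = Function.update f x.2 (some p) := hstep.2
      exact .cons (A.toCCA_step_iff.mpr ⟨hstep, rfl⟩) (ih.mpr ⟨f', hrun, rfl⟩)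

theorem Weak.toCCA_lang {A : CMA Q S D} (hA : A.Weak) : A.toCCA.Lang D = A.Lang := by
  ext w
  have hinit : ((A.toCCA.init, fun _ => 0) : Q × (D → ℕ)) =
      (A.init, encode ∘ fun _ => (none : Option Q)) :=
    Prod.ext rfl (funext fun _ => encode_none.symm)
  simp only [CCA.Lang, Lang, Set.mem_ofPred_eq, CCA.Accepts, hA.accepts_iff, hinit,
    toCCA_run_iff, initConfig]
  constructor
  · rintro ⟨q, _, ⟨f, hrun, -⟩, hq⟩
    exact ⟨q, f, hrun, hq⟩
  · rintro ⟨q, f, hrun, hq⟩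
    exact ⟨q, _, ⟨f, hrun, rfl⟩, hq⟩

end CMA

theorem wcma_to_cca_general (S D : Type) [DecidableEq D] [Finite S]
    (n : ℕ) (A : CMA (Fin n) S D) (hA : A.Weak) :
    ∃ (k : ℕ) (B : CCA (Fin k) S), B.Lang D = A.Lang :=
  ⟨n, A.toCCA, hA.toCCA_lang⟩

/-- For every weak class memory automaton there exists a class counting
automaton recognizing the same data language. -/
theorem wcma_to_cca (S D : Type) [DecidableEq D] [Finite S] [Infinite D]
    (n : ℕ) (A : CMA (Fin n) S D) (hA : A.Weak) :
    ∃ (k : ℕ) (B : CCA (Fin k) S), B.Lang D = A.Lang :=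
  wcma_to_cca_general S D n A hA
end

section
/- For every class counting automaton there exists a weak class memory automaton recognizing the same data language; moreover, if the class counting automaton is deterministic then the resulting weak class memory automaton can be chosen deterministic. -/
/-!
A class counting automaton can only compare a counter with the constants occurring in its
constraints, so once every constant is below `N`, two counter values that agree after capping
at `N` are indistinguishable, and capping commutes with increments and resets. A class memory
automaton whose states pair a CCA state with a capped counter value therefore simulates the CCA:
the memory of a data value stores the state reached at its last occurrence, hence its capped
counter. Local acceptance plays no role, so the automaton is weak, and it is deterministic
whenever the CCA is.
-/

namespace CMA

variable {Q Q' S D : Type}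

def transfer (φ : Q ≃ Q') (A : CMA Q S D) : CMA Q' S D where
  init := φ A.init
  δ q a s := φ '' A.δ (φ.symm q) a (s.map φ.symm)
  FL := φ.symm ⁻¹' A.FL
  FG := φ.symm ⁻¹' A.FG
  sub _ hq := A.sub hq

theorem transfer_symm_transfer (φ : Q ≃ Q') (A : CMA Q S D) :
    (A.transfer φ).transfer φ.symm = A := by
  cases A
  simp [transfer, Set.image_image, Option.map_map, Set.preimage_preimage]

theorem Weak.transfer {A : CMA Q S D} (hA : A.Weak) (φ : Q ≃ Q') : (A.transfer φ).Weak :=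
  (congrArg (φ.symm ⁻¹' ·) hA).trans Set.preimage_univ

theorem Deterministic.transfer {A : CMA Q S D} (hA : A.Deterministic) (φ : Q ≃ Q') :
    (A.transfer φ).Deterministic := by
  intro q a s
  obtain ⟨q', hq'⟩ := hA (φ.symm q) a (s.map φ.symm)
  exact ⟨φ q', by simp [CMA.transfer, hq']⟩

variable [DecidableEq D]

def mapConfig (φ : Q ≃ Q') (c : Q × (D → Option Q)) : Q' × (D → Option Q') :=
  (φ c.1, Option.map φ ∘ c.2)

theorem Step.transfer {A : CMA Q S D} {c c' : Q × (D → Option Q)} {x : S × D}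
    (h : A.Step c x c') (φ : Q ≃ Q') :
    (A.transfer φ).Step (mapConfig φ c) x (mapConfig φ c') := by
  obtain ⟨hδ, hupd⟩ := h
  refine ⟨?_, ?_⟩
  · simpa [CMA.transfer, mapConfig, Option.map_map] using hδ
  · simp [mapConfig, hupd, Function.comp_update]

theorem Run.transfer {A : CMA Q S D} {c c' : Q × (D → Option Q)} {w : List (S × D)}
    (h : A.Run c w c') (φ : Q ≃ Q') :
    (A.transfer φ).Run (mapConfig φ c) w (mapConfig φ c') := by
  induction h with
  | nil => exact .nil _
  | cons hs _ ih => exact .cons (hs.transfer φ) ih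

theorem lang_subset_lang_transfer (A : CMA Q S D) (φ : Q ≃ Q') :
    A.Lang ⊆ (A.transfer φ).Lang := by
  rintro w ⟨q, f, hrun, hFG, hFL⟩
  refine ⟨φ q, Option.map φ ∘ f, hrun.transfer φ, by simpa [CMA.transfer] using hFG, ?_⟩
  intro d s hs
  obtain ⟨q', hq', rfl⟩ := Option.map_eq_some_iff.mp hs
  simpa [CMA.transfer] using hFL d q' hq'

theorem lang_transfer (A : CMA Q S D) (φ : Q ≃ Q') : (A.transfer φ).Lang = A.Lang := by
  refine subset_antisymm ?_ (A.lang_subset_lang_transfer φ)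
  simpa [transfer_symm_transfer] using (A.transfer φ).lang_subset_lang_transfer φ.symm

end CMA

theorem CmpOp.sat_min_iff (cmp : CmpOp) {x e N : ℕ} (he : e < N) :
    cmp.sat (min x N) e ↔ cmp.sat x e := by
  cases cmp <;> simp only [CmpOp.sat] <;> omega

theorem BagOp.min_apply_min (π : BagOp) (x m N : ℕ) :
    min (π.apply (min x N) m) N = min (π.apply x m) N := by
  cases π <;> simp only [BagOp.apply]; omega

namespace CCA

variable {Q S D : Type}

theorem exists_forall_constant_lt (B : CCA Q S) : ∃ N, ∀ t ∈ B.Δ, t.2.2.1.2 < N := by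
  obtain ⟨M, hM⟩ := (B.fin.image fun t => t.2.2.1.2).bddAbove
  exact ⟨M + 1, fun t ht => Nat.lt_succ_of_le (hM ⟨t, ht, rfl⟩)⟩

def cappedCounter {N : ℕ} : Option (Q × Fin (N + 1)) → ℕ
  | none => 0
  | some q => q.2

def toCMA (B : CCA Q S) (N : ℕ) (D : Type) : CMA (Q × Fin (N + 1)) S D where
  init := (B.init, 0)
  δ q a s := {q' | ∃ cmp e π m, (q.1, a, (cmp, e), π, m, q'.1) ∈ B.Δ ∧
      cmp.sat (cappedCounter s) e ∧ (q'.2 : ℕ) = min (π.apply (cappedCounter s) m) N}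
  FL := Set.univ
  FG := {q | q.1 ∈ B.F}
  sub _ _ := trivial

theorem weak_toCMA (B : CCA Q S) (N : ℕ) : (B.toCMA N D).Weak := rfl

theorem Deterministic.toCMA {B : CCA Q S} (hB : B.Deterministic) (N : ℕ) :
    (B.toCMA N D).Deterministic := by
  intro q a s
  obtain ⟨⟨⟨cmp, e⟩, π, m, p⟩, ⟨hΔ, hsat⟩, huniq⟩ := hB q.1 a (cappedCounter s)
  refine ⟨(p, ⟨min (π.apply (cappedCounter s) m) N, by omega⟩), ?_⟩
  ext ⟨p', v⟩
  constructor
  · rintro ⟨cmp', e', π', m', hΔ', hsat', hv⟩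
    cases huniq _ ⟨hΔ', hsat'⟩
    exact Prod.ext rfl (Fin.ext hv)
  · rintro ⟨⟩
    exact ⟨cmp, e, π, m, hΔ, hsat, rfl⟩

def CappedConfig (N : ℕ) (c : Q × (D → ℕ))
    (b : (Q × Fin (N + 1)) × (D → Option (Q × Fin (N + 1)))) : Prop :=
  b.1.1 = c.1 ∧ ∀ d, cappedCounter (b.2 d) = min (c.2 d) N

variable [DecidableEq D] {B : CCA Q S} {N : ℕ}

theorem step_toCMA_of_step (hN : ∀ t ∈ B.Δ, t.2.2.1.2 < N)
    {c c' : Q × (D → ℕ)} {x : S × D} (h : B.Step c x c') {b} (hb : CappedConfig N c b) :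
    ∃ b', (B.toCMA N D).Step b x b' ∧ CappedConfig N c' b' := by
  obtain ⟨cmp, e, π, m, hΔ, hsat, hupd⟩ := h
  let q' : Q × Fin (N + 1) := (c'.1, ⟨min (π.apply (c.2 x.2) m) N, by omega⟩)
  refine ⟨(q', Function.update b.2 x.2 (some q')), ⟨?_, rfl⟩, rfl, fun d => ?_⟩
  · refine ⟨cmp, e, π, m, hb.1 ▸ hΔ, ?_, ?_⟩
    · rwa [hb.2, cmp.sat_min_iff (hN _ hΔ)]
    · rw [hb.2, π.min_apply_min]
  · rcases eq_or_ne d x.2 with rfl | hd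
    · simp [hupd, cappedCounter, q']
    · simp [hupd, hd, hb.2 d]

theorem step_of_step_toCMA (hN : ∀ t ∈ B.Δ, t.2.2.1.2 < N)
    {b b'} {x : S × D} (h : (B.toCMA N D).Step b x b') {c : Q × (D → ℕ)}
    (hc : CappedConfig N c b) :
    ∃ c', B.Step c x c' ∧ CappedConfig N c' b' := by
  obtain ⟨⟨cmp, e, π, m, hΔ, hsat, hval⟩, hupd⟩ := h
  refine ⟨(b'.1.1, Function.update c.2 x.2 (π.apply (c.2 x.2) m)),
    ⟨cmp, e, π, m, hc.1 ▸ hΔ, ?_, rfl⟩, rfl, fun d => ?_⟩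
  · rwa [← cmp.sat_min_iff (hN _ hΔ), ← hc.2]
  · rcases eq_or_ne d x.2 with rfl | hd
    · simp only [hupd, Function.update_self]
      exact hval.trans (by rw [hc.2, π.min_apply_min])
    · simp [hupd, hd, hc.2 d]

theorem exists_run_toCMA_of_run (hN : ∀ t ∈ B.Δ, t.2.2.1.2 < N)
    {c c' : Q × (D → ℕ)} {w : List (S × D)} (h : B.Run c w c') {b} (hb : CappedConfig N c b) :
    ∃ b', (B.toCMA N D).Run b w b' ∧ CappedConfig N c' b' := by
  induction h generalizing b with
  | nil => exact ⟨b, .nil _, hb⟩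
  | cons hs _ ih =>
    obtain ⟨b₁, hstep, hb₁⟩ := step_toCMA_of_step hN hs hb
    obtain ⟨b', hrun, hb'⟩ := ih hb₁
    exact ⟨b', .cons hstep hrun, hb'⟩

theorem exists_run_of_run_toCMA (hN : ∀ t ∈ B.Δ, t.2.2.1.2 < N)
    {b b'} {w : List (S × D)} (h : (B.toCMA N D).Run b w b') {c : Q × (D → ℕ)}
    (hc : CappedConfig N c b) :
    ∃ c', B.Run c w c' ∧ CappedConfig N c' b' := by
  induction h generalizing c with
  | nil => exact ⟨c, .nil _, hc⟩
  | cons hs _ ih =>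
    obtain ⟨c₁, hstep, hc₁⟩ := step_of_step_toCMA hN hs hc
    obtain ⟨c', hrun, hc'⟩ := ih hc₁
    exact ⟨c', .cons hstep hrun, hc'⟩

theorem lang_toCMA (hN : ∀ t ∈ B.Δ, t.2.2.1.2 < N) : (B.toCMA N D).Lang = B.Lang D := by
  have hinit : CappedConfig N (B.init, fun _ => 0) (B.toCMA N D).initConfig :=
    ⟨rfl, fun _ => rfl⟩
  ext w
  constructor
  · rintro ⟨q, f, hrun, hFG, -⟩
    obtain ⟨⟨_, h⟩, hrun', rfl, -⟩ := exists_run_of_run_toCMA hN hrun hinit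
    exact ⟨q.1, h, hrun', hFG⟩
  · rintro ⟨p, h, hrun, hF⟩
    obtain ⟨⟨q, f⟩, hrun', rfl, -⟩ := exists_run_toCMA_of_run hN hrun hinit
    exact ⟨q, f, hrun', hF, fun _ _ _ => trivial⟩

end CCA

theorem cca_to_wcma_general (S D : Type) [DecidableEq D]
    (n : ℕ) (B : CCA (Fin n) S) :
    ∃ (k : ℕ) (A : CMA (Fin k) S D), A.Weak ∧ A.Lang = B.Lang D ∧
      (B.Deterministic → A.Deterministic) := by
  obtain ⟨N, hN⟩ := B.exists_forall_constant_lt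
  refine ⟨_, (B.toCMA N D).transfer finProdFinEquiv, (B.weak_toCMA N).transfer _, ?_,
    fun hB => (hB.toCMA N).transfer _⟩
  rw [CMA.lang_transfer, CCA.lang_toCMA hN]

/-- For every class counting automaton there exists a weak class memory
automaton recognizing the same data language; moreover, if the class counting automaton
is deterministic then the resulting weak CMA can be chosen deterministic. -/
theorem cca_to_wcma (S D : Type) [DecidableEq D] [Finite S] [Infinite D]
    (n : ℕ) (B : CCA (Fin n) S) :
    ∃ (k : ℕ) (A : CMA (Fin k) S D), A.Weak ∧ A.Lang = B.Lang D ∧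
      (B.Deterministic → A.Deterministic) :=
  cca_to_wcma_general S D n B
end

section
/- Every data language recognized by a non-reset history register automaton of type m is recognized by a weak class memory automaton. -/
/-- A non-reset history register automaton of type `m` with state set `Q` over alphabet `S`. -/
structure NRHRA (Q S : Type) (m : ℕ) where
  δ : Set (Q × S × (Set (Fin m) × Set (Fin m)) × Q)
  init : Q
  F : Set Q

namespace NRHRA

variable {Q S D : Type} {m : ℕ}

/-- One step on input `(a,d)`: there is `X ⊆ [m]` with `(q, a, (H⁻¹(d), X), q') ∈ δ`, and
the new assignment is obtained by removing `d` from every history and adding `d` to the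
histories indexed by `X`. -/
def Step (B : NRHRA Q S m) (c : Q × (Fin m → Set D)) (x : S × D) (c' : Q × (Fin m → Set D)) :
    Prop :=
  ∃ X : Set (Fin m), (c.1, x.1, ({i | x.2 ∈ c.2 i}, X), c'.1) ∈ B.δ ∧
    ∀ i, c'.2 i = {d | (d ∈ c.2 i ∧ d ≠ x.2) ∨ (d = x.2 ∧ i ∈ X)}

inductive Run (B : NRHRA Q S m) :
    (Q × (Fin m → Set D)) → List (S × D) → (Q × (Fin m → Set D)) → Prop
  | nil (c) : Run B c [] c
  | cons {c x c' w c''} : B.Step c x c' → Run B c' w c'' → Run B c (x :: w) c''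

/-- Acceptance is by final state, starting with the initially empty assignment. -/
def Accepts (B : NRHRA Q S m) (w : List (S × D)) : Prop :=
  ∃ q H, B.Run ((B.init, fun _ => (∅ : Set D))) w (q, H) ∧ q ∈ B.F

def Lang (B : NRHRA Q S m) (D : Type) : Set (List (S × D)) := {w | B.Accepts w}

end NRHRA

/-!
The weak CMA runs the nrHRA in its first state component and additionally remembers, in its
state, the set `X` of histories into which the datum just read was put. Since the class memory
stores, for each datum `d`, the state reached when `d` was last read, it recovers `H⁻¹(d)` as the
`X`-component of that state (and `∅` for a fresh datum). This correspondence between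
configurations is a bisimulation, so the two automata accept the same words; every state of the
CMA is locally accepting, and acceptance is decided by the nrHRA state alone.
-/

namespace NRHRA

variable {Q S D P : Type} {m : ℕ}

/-- `histInv H d` is `H⁻¹(d)`. -/
def histInv (H : Fin m → Set D) (d : D) : Set (Fin m) := {i | d ∈ H i}

theorem histInv_of_step [DecidableEq D] {H H' : Fin m → Set D} {x : D} {X : Set (Fin m)}
    (hH : ∀ i, H' i = {d | (d ∈ H i ∧ d ≠ x) ∨ (d = x ∧ i ∈ X)}) :
    histInv H' = Function.update (histInv H) x X := by
  funext d
  ext i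
  by_cases hd : d = x
  · subst hd
    simp [histInv, hH]
  · simp [histInv, hH, hd]

def storedRegs (e : P ≃ Q × Set (Fin m)) : Option P → Set (Fin m)
  | none => ∅
  | some p => (e p).2

def toCMA (B : NRHRA Q S m) (D : Type) (e : P ≃ Q × Set (Fin m)) : CMA P S D where
  init := e.symm (B.init, ∅)
  δ p a o := {p' | ((e p).1, a, (storedRegs e o, (e p').2), (e p').1) ∈ B.δ}
  FL := Set.univ
  FG := {p | (e p).1 ∈ B.F}
  sub := Set.subset_univ _

theorem weak_toCMA (B : NRHRA Q S m) (D : Type) [DecidableEq D] (e : P ≃ Q × Set (Fin m)) :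
    (B.toCMA D e).Weak :=
  rfl

def ConfigMatch (e : P ≃ Q × Set (Fin m)) (c : P × (D → Option P))
    (b : Q × (Fin m → Set D)) : Prop :=
  (e c.1).1 = b.1 ∧ storedRegs e ∘ c.2 = histInv b.2

variable {B : NRHRA Q S m} {e : P ≃ Q × Set (Fin m)}

theorem ConfigMatch.storedRegs_eq {c : P × (D → Option P)} {b : Q × (Fin m → Set D)}
    (h : ConfigMatch e c b) (d : D) : storedRegs e (c.2 d) = {i | d ∈ b.2 i} :=
  congrFun h.2 d

theorem configMatch_initConfig :
    ConfigMatch e (B.toCMA D e).initConfig (B.init, fun _ => (∅ : Set D)) := by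
  refine ⟨by simp [toCMA, CMA.initConfig], ?_⟩
  funext d
  simp [histInv, storedRegs, CMA.initConfig]

variable [DecidableEq D]

theorem configMatch_update {f : D → Option P} {H H' : Fin m → Set D} {x : D} {p' : P} {q' : Q}
    {X : Set (Fin m)} (hp' : e p' = (q', X)) (h : storedRegs e ∘ f = histInv H)
    (hH : ∀ i, H' i = {d | (d ∈ H i ∧ d ≠ x) ∨ (d = x ∧ i ∈ X)}) :
    ConfigMatch e (p', Function.update f x (some p')) (q', H') := by
  refine ⟨by rw [hp'], ?_⟩
  rw [Function.comp_update, h, histInv_of_step hH, storedRegs, hp']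

theorem ConfigMatch.exists_step {c c' : P × (D → Option P)} {b : Q × (Fin m → Set D)}
    {x : S × D} (h : ConfigMatch e c b) (hs : (B.toCMA D e).Step c x c') :
    ∃ b', B.Step b x b' ∧ ConfigMatch e c' b' := by
  obtain ⟨p', f'⟩ := c'
  obtain ⟨hδ, hf'⟩ := hs
  dsimp only at hf'
  subst hf'
  let H' : Fin m → Set D := fun i => {d | (d ∈ b.2 i ∧ d ≠ x.2) ∨ (d = x.2 ∧ i ∈ (e p').2)}
  refine ⟨((e p').1, H'), ⟨(e p').2, ?_, fun _ => rfl⟩, ?_⟩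
  · have hδ' : ((e c.1).1, x.1, (storedRegs e (c.2 x.2), (e p').2), (e p').1) ∈ B.δ := hδ
    rwa [h.1, h.storedRegs_eq] at hδ'
  · exact configMatch_update rfl h.2 fun _ => rfl

theorem ConfigMatch.exists_toCMA_step {c : P × (D → Option P)} {b b' : Q × (Fin m → Set D)}
    {x : S × D} (h : ConfigMatch e c b) (hs : B.Step b x b') :
    ∃ c', (B.toCMA D e).Step c x c' ∧ ConfigMatch e c' b' := by
  obtain ⟨X, hδ, hH⟩ := hs
  let p' := e.symm (b'.1, X)
  have hp' : e p' = (b'.1, X) := e.apply_symm_apply _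
  refine ⟨(p', Function.update c.2 x.2 (some p')), ⟨?_, rfl⟩, ?_⟩
  · show ((e c.1).1, x.1, (storedRegs e (c.2 x.2), (e p').2), (e p').1) ∈ B.δ
    rwa [h.1, h.storedRegs_eq, hp']
  · exact configMatch_update hp' h.2 hH

theorem ConfigMatch.exists_run {c c' : P × (D → Option P)} {b : Q × (Fin m → Set D)}
    {w : List (S × D)} (h : ConfigMatch e c b) (hr : (B.toCMA D e).Run c w c') :
    ∃ b', B.Run b w b' ∧ ConfigMatch e c' b' := by
  induction hr generalizing b with
  | nil => exact ⟨b, .nil b, h⟩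
  | cons hs _ ih =>
    obtain ⟨b₁, hs₁, h₁⟩ := h.exists_step hs
    obtain ⟨b', hr', h'⟩ := ih h₁
    exact ⟨b', .cons hs₁ hr', h'⟩

theorem ConfigMatch.exists_toCMA_run {c : P × (D → Option P)} {b b' : Q × (Fin m → Set D)}
    {w : List (S × D)} (h : ConfigMatch e c b) (hr : B.Run b w b') :
    ∃ c', (B.toCMA D e).Run c w c' ∧ ConfigMatch e c' b' := by
  induction hr generalizing c with
  | nil => exact ⟨c, .nil c, h⟩
  | cons hs _ ih =>
    obtain ⟨c₁, hs₁, h₁⟩ := h.exists_toCMA_step hs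
    obtain ⟨c', hr', h'⟩ := ih h₁
    exact ⟨c', .cons hs₁ hr', h'⟩

theorem lang_toCMA (B : NRHRA Q S m) (e : P ≃ Q × Set (Fin m)) :
    (B.toCMA D e).Lang = B.Lang D := by
  ext w
  constructor
  · rintro ⟨p, f, hr, hF, -⟩
    obtain ⟨⟨q, H⟩, hr', hq, -⟩ := configMatch_initConfig.exists_run hr
    have hq : (e p).1 = q := hq
    exact ⟨q, H, hr', hq ▸ hF⟩
  · rintro ⟨q, H, hr, hF⟩
    obtain ⟨⟨p, f⟩, hr', hq, -⟩ := configMatch_initConfig.exists_toCMA_run hr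
    have hq : (e p).1 = q := hq
    exact ⟨p, f, hr', show (e p).1 ∈ B.F from hq ▸ hF, fun _ _ _ => trivial⟩

end NRHRA

theorem nrhra_to_wcma_general (S D : Type) [DecidableEq D]
    (m n : ℕ) (B : NRHRA (Fin n) S m) :
    ∃ (k : ℕ) (A : CMA (Fin k) S D), A.Weak ∧ A.Lang = B.Lang D :=
  let e := (Finite.equivFin (Fin n × Set (Fin m))).symm
  ⟨_, B.toCMA D e, B.weak_toCMA D e, B.lang_toCMA e⟩

/-- Every data language recognized by a non-reset history register automaton
of type `m` is recognized by a weak class memory automaton. -/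
theorem nrhra_to_wcma (S D : Type) [DecidableEq D] [Finite S] [Infinite D]
    (m n : ℕ) (B : NRHRA (Fin n) S m) :
    ∃ (k : ℕ) (A : CMA (Fin k) S D), A.Weak ∧ A.Lang = B.Lang D :=
  nrhra_to_wcma_general S D m n B
end

section
/- For any finite label set Q and any bound k, the set of finite unordered Q-labelled rooted trees of depth at most k, quasi-ordered by existence of a root- and label-preserving tree homomorphism, is a well-quasi-order. -/
/-- Finite rooted trees with nodes labelled by `Q`.  The children are given as a list,
but the homomorphism quasi-order below does not depend on the order of children, so these
represent finite unordered labelled rooted trees. -/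
inductive LTree (Q : Type) : Type
  | node : Q → List (LTree Q) → LTree Q

namespace LTree

variable {Q : Type}

/-- `Hom T₁ T₂` holds iff there is a tree homomorphism from `T₁` to `T₂`, i.e. a map of
nodes sending the root to the root and preserving parents and labels.  (Equivalently:
root labels agree and every child subtree of `T₁` maps homomorphically into some child
subtree of `T₂`.) -/
def Hom : LTree Q → LTree Q → Prop
  | .node a cs, .node b ds => a = b ∧ ∀ c ∈ cs, ∃ d ∈ ds, Hom c d
decreasing_by
  have := List.sizeOf_lt_of_mem (by assumption : c ∈ cs)
  simp_wf <;> omega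

/-- `DepthLE k T`: every node of `T` is at distance at most `k − 1` from the root
(a single node has depth 1). -/
def DepthLE : ℕ → LTree Q → Prop
  | k, .node _ cs => 1 ≤ k ∧ ∀ c ∈ cs, DepthLE (k - 1) c
decreasing_by
  have := List.sizeOf_lt_of_mem (by assumption : c ∈ cs)
  simp_wf <;> omega

end LTree



/-!
Induction on the depth bound. A tree of depth `≤ k + 1` is a label together with a list of
children of depth `≤ k`, and it embeds into another one as soon as the labels agree and its
list of children embeds, as a subsequence, child by child. Lists over a well-quasi-order are
well-quasi-ordered by Higman's lemma, a finite set of labels is well-quasi-ordered by equality,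
and a product of two well-quasi-orders is again one, so trees of depth `≤ k + 1` inherit the
property from trees of depth `≤ k`.
-/

theorem List.SublistForall₂.exists_mem_of_mem {α β : Type*} {R : α → β → Prop}
    {l₁ : List α} {l₂ : List β} (h : List.SublistForall₂ R l₁ l₂) :
    ∀ a ∈ l₁, ∃ b ∈ l₂, R a b := by
  induction h with
  | nil => simp
  | cons hab _ ih =>
    rintro a (_ | ⟨_, ha⟩)
    · exact ⟨_, List.mem_cons_self, hab⟩
    · obtain ⟨b, hb, hr⟩ := ih a ha
      exact ⟨b, List.mem_cons_of_mem _ hb, hr⟩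
  | cons_right _ ih =>
    intro a ha
    obtain ⟨b, hb, hr⟩ := ih a ha
    exact ⟨b, List.mem_cons_of_mem _ hb, hr⟩

theorem Set.PartiallyWellOrderedOn.of_mapsTo {α β : Type*} {r : α → α → Prop}
    {r' : β → β → Prop} {s : Set α} {t : Set β} {f : α → β}
    (ht : t.PartiallyWellOrderedOn r') (hf : Set.MapsTo f s t)
    (hr : ∀ a ∈ s, ∀ b ∈ s, r' (f a) (f b) → r a b) : s.PartiallyWellOrderedOn r := by
  rw [Set.partiallyWellOrderedOn_iff_exists_lt]
  intro g hg
  obtain ⟨m, n, hmn, hgmn⟩ := ht.exists_lt fun n => hf (hg n)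
  exact ⟨m, n, hmn, hr _ (hg m) _ (hg n) hgmn⟩

namespace LTree

variable {Q : Type}

def label : LTree Q → Q
  | node a _ => a

def children : LTree Q → List (LTree Q)
  | node _ cs => cs

@[elab_as_elim, induction_eliminator]
theorem induction {motive : LTree Q → Prop}
    (node : ∀ a cs, (∀ c ∈ cs, motive c) → motive (node a cs)) : ∀ t, motive t
  | .node a cs => node a cs fun c _ => induction node c
decreasing_by
  have := List.sizeOf_lt_of_mem ‹c ∈ cs›
  simp_wf
  omega

theorem hom_iff {t s : LTree Q} :
    Hom t s ↔ t.label = s.label ∧ ∀ c ∈ t.children, ∃ d ∈ s.children, Hom c d := by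
  cases t
  cases s
  rw [Hom]
  rfl

theorem depthLE_iff {k : ℕ} {t : LTree Q} :
    DepthLE k t ↔ 1 ≤ k ∧ ∀ c ∈ t.children, DepthLE (k - 1) c := by
  cases t
  rw [DepthLE]
  rfl

theorem hom_refl (t : LTree Q) : Hom t t := by
  induction t with
  | node a cs ih => exact hom_iff.2 ⟨rfl, fun c hc => ⟨c, hc, ih c hc⟩⟩

theorem hom_trans {t₁ t₂ t₃ : LTree Q} (h₁₂ : Hom t₁ t₂) (h₂₃ : Hom t₂ t₃) : Hom t₁ t₃ := by
  induction t₁ generalizing t₂ t₃ with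
  | node a cs ih =>
    rw [hom_iff] at h₁₂ h₂₃ ⊢
    refine ⟨h₁₂.1.trans h₂₃.1, fun c hc => ?_⟩
    obtain ⟨d, hd, hcd⟩ := h₁₂.2 c hc
    obtain ⟨e, he, hde⟩ := h₂₃.2 d hd
    exact ⟨e, he, ih c hc hcd hde⟩

instance : IsPreorder (LTree Q) Hom where
  refl := hom_refl
  trans _ _ _ := hom_trans

theorem hom_of_label_eq_of_sublistForall₂ {t s : LTree Q} (hlabel : t.label = s.label)
    (hchildren : List.SublistForall₂ Hom t.children s.children) : Hom t s :=
  hom_iff.2 ⟨hlabel, hchildren.exists_mem_of_mem⟩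

theorem not_depthLE_zero (t : LTree Q) : ¬ DepthLE 0 t := fun h =>
  Nat.not_succ_le_zero 0 (depthLE_iff.1 h).1

theorem DepthLE.children_of_succ {k : ℕ} {t : LTree Q} (h : DepthLE (k + 1) t) :
    ∀ c ∈ t.children, DepthLE k c :=
  (depthLE_iff.1 h).2

theorem partiallyWellOrderedOn_depthLE [Finite Q] (k : ℕ) :
    {t : LTree Q | DepthLE k t}.PartiallyWellOrderedOn Hom := by
  induction k with
  | zero => simp [not_depthLE_zero]
  | succ k ih =>
    have hlabels : (Set.univ : Set Q).PartiallyWellOrderedOn (· = ·) :=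
      Set.finite_univ.partiallyWellOrderedOn
    have hchildren := ih.partiallyWellOrderedOn_sublistForall₂ Hom
    refine (hlabels.prod hchildren).of_mapsTo (f := fun t => (t.label, t.children))
      (fun t ht => ⟨Set.mem_univ _, DepthLE.children_of_succ ht⟩) ?_
    exact fun t _ s _ h => hom_of_label_eq_of_sublistForall₂ h.1 h.2

end LTree

/-- For any finite label set `Q` and any bound `k`, the set of finite
unordered `Q`-labelled rooted trees of depth at most `k`, quasi-ordered by existence of a
root- and label-preserving tree homomorphism, is a well-quasi-order. -/
theorem ltree_hom_wqo (Q : Type) [Finite Q] (k : ℕ) :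
    Reflexive (fun T₁ T₂ : LTree Q => LTree.Hom T₁ T₂) ∧
    Transitive (fun T₁ T₂ : LTree Q => LTree.Hom T₁ T₂) ∧
    ∀ f : ℕ → {T : LTree Q // LTree.DepthLE k T}, ∃ i j, i < j ∧ LTree.Hom (f i).1 (f j).1 :=
  ⟨LTree.hom_refl, fun _ _ _ => LTree.hom_trans,
    fun f => (LTree.partiallyWellOrderedOn_depthLE k).exists_lt fun n => (f n).2⟩
end

section
/- The class of data languages recognized by weak nested data class memory automata of level l is closed under intersection and union. -/
/-- The canonical nested data set of level `l`: a data value of level `i` (1 ≤ i ≤ l) is a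
list of naturals of length `i`; `pred` is given by dropping the last element, so the
ancestors of a data value are its nonempty proper prefixes.  This is a full forest of
infinitely many trees of level `l`. -/
def ND (l : ℕ) : Type := {xs : List ℕ // xs ≠ [] ∧ xs.length ≤ l}

namespace ND

variable {l : ℕ}

instance : DecidableEq (ND l) := Subtype.instDecidableEq

/-- The level of a data value. -/
def level (d : ND l) : ℕ := d.1.length

/-- The ancestor of `d` at level `j+1` (for `j+1 ≤ level d`); `ancestor d (level d - 1) = d`. -/
def ancestor (d : ND l) (j : ℕ) : ND l :=
  ⟨d.1.take (j + 1), by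
    refine ⟨?_, ?_⟩
    · have h1 : 0 < d.1.length := by
        have := d.2.1; cases h : d.1 <;> simp_all
      have : 0 < (d.1.take (j + 1)).length := by
        rw [List.length_take]; exact lt_min (Nat.succ_pos j) h1
      exact List.ne_nil_of_length_pos this
    · rw [List.length_take]; exact le_trans (min_le_right _ _) d.2.2⟩

end ND

/-- A nested data CMA of level `l`, with state set `Q` over alphabet `S`.  The transition
map, on reading a level-`i` data value, consults the class memory of all `i` ancestors of
the value (from the root down, the value itself included), presented as a list of length `i`. -/
structure NDCMA (l : ℕ) (Q S : Type) where
  init : Q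
  δ : Q → S → List (Option Q) → Set Q
  FL : Set Q
  FG : Set Q
  sub : FG ⊆ FL

namespace NDCMA

variable {l : ℕ} {Q S : Type}

/-- The class-memory profile of the ancestors of `d` (root first, `d` last). -/
def profile (f : ND l → Option Q) (d : ND l) : List (Option Q) :=
  (List.range d.1.length).map fun j => f (d.ancestor j)

/-- One step on input `(a,d)` where `d` has level `i`: choose
`q' ∈ δ(q, a, (i, f(pred^{i-1} d), …, f(pred d), f d))` and update the class memory of `d`
and of each of its ancestors to `q'`. -/
def Step (A : NDCMA l Q S) (c : Q × (ND l → Option Q)) (x : S × ND l)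
    (c' : Q × (ND l → Option Q)) : Prop :=
  c'.1 ∈ A.δ c.1 x.1 (profile c.2 x.2) ∧
    (∀ e : ND l, e.1 <+: x.2.1 → c'.2 e = some c'.1) ∧
    (∀ e : ND l, ¬ e.1 <+: x.2.1 → c'.2 e = c.2 e)

inductive Run (A : NDCMA l Q S) :
    (Q × (ND l → Option Q)) → List (S × ND l) → (Q × (ND l → Option Q)) → Prop
  | nil (c) : Run A c [] c
  | cons {c x c' w c''} : A.Step c x c' → Run A c' w c'' → Run A c (x :: w) c''

def initConfig (A : NDCMA l Q S) : Q × (ND l → Option Q) := (A.init, fun _ => none)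

def Accepts (A : NDCMA l Q S) (w : List (S × ND l)) : Prop :=
  ∃ q f, A.Run A.initConfig w (q, f) ∧ q ∈ A.FG ∧ ∀ d s, f d = some s → s ∈ A.FL

def Lang (A : NDCMA l Q S) : Set (List (S × ND l)) := {w | A.Accepts w}

/-- Weakness: every state is locally accepting. -/
def Weak (A : NDCMA l Q S) : Prop := A.FL = Set.univ

/-- Determinism: every value of the transition map is a singleton. -/
def Deterministic (A : NDCMA l Q S) : Prop := ∀ q a p, ∃ q', A.δ q a p = {q'}

end NDCMA

/-! Intersection is recognised by the synchronous product, whose class memory pairs the class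
memories of the two factors: both factors write to exactly the same data values, so the pairing
loses nothing. For union, each automaton is first completed by an absorbing sink, so that it has
a run on every word, and the product accepts when either component does. Weakness makes
acceptance depend on the final state alone, and a pair of states is reachable in the product
exactly when each component is reachable in its factor. -/

namespace NDCMA

variable {l : ℕ} {S Q Q' Q₁ Q₂ : Type}

theorem profile_comp (h : Option Q → Option Q') (f : ND l → Option Q) (d : ND l) :
    profile (fun e => h (f e)) d = (profile f d).map h := by
  simp [profile, List.map_map, Function.comp_def]

/-- `g` is a partial map on states whose domain contains every predecessor of its members. -/
theorem Run.pmap {A : NDCMA l Q S} {B : NDCMA l Q' S} (g : Q → Option Q')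
    (hδ : ∀ q a p r r', r ∈ A.δ q a p → g r = some r' →
      ∃ q', g q = some q' ∧ r' ∈ B.δ q' a (p.map (·.bind g)))
    {c c' : Q × (ND l → Option Q)} {w : List (S × ND l)} (h : A.Run c w c')
    {r' : Q'} (hr : g c'.1 = some r') :
    ∃ q', g c.1 = some q' ∧
      B.Run (q', fun d => (c.2 d).bind g) w (r', fun d => (c'.2 d).bind g) := by
  induction h with
  | nil => exact ⟨r', hr, Run.nil _⟩
  | @cons c x cm w c' hs _ ih =>
    obtain ⟨qm, hqm, hrun⟩ := ih hr
    obtain ⟨hδA, hpre, hrest⟩ := hs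
    obtain ⟨q', hq', hδB⟩ := hδ _ _ _ _ _ hδA hqm
    refine ⟨q', hq', Run.cons ⟨?_, ?_, ?_⟩ hrun⟩
    · rwa [profile_comp (·.bind g)]
    · intro e he; simp [hpre e he, hqm]
    · intro e he; simp [hrest e he]

theorem Run.map {A : NDCMA l Q S} {B : NDCMA l Q' S} (φ : Q → Q')
    (hδ : ∀ q a p r, r ∈ A.δ q a p → φ r ∈ B.δ (φ q) a (p.map (Option.map φ)))
    {c c' : Q × (ND l → Option Q)} {w : List (S × ND l)} (h : A.Run c w c') :
    B.Run (φ c.1, fun d => (c.2 d).map φ) w (φ c'.1, fun d => (c'.2 d).map φ) := by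
  have hbind : (fun o : Option Q => o.bind (some ∘ φ)) = Option.map φ :=
    funext fun _ => Option.map_eq_bind.symm
  obtain ⟨q', hq', hrun⟩ := h.pmap (B := B) (some ∘ φ)
    (fun q a p r r' hr hr' => ⟨φ q, rfl, by
      rw [hbind, ← Option.some.inj hr']; exact hδ q a p r hr⟩) rfl
  cases Option.some.inj hq'
  simpa only [← Option.map_eq_bind] using hrun

def Reachable (A : NDCMA l Q S) (w : List (S × ND l)) (q : Q) : Prop :=
  ∃ f, A.Run A.initConfig w (q, f)

theorem Reachable.map {A : NDCMA l Q S} {B : NDCMA l Q' S} {w : List (S × ND l)} {q : Q}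
    (h : A.Reachable w q) (φ : Q → Q') (hinit : φ A.init = B.init)
    (hδ : ∀ q a p r, r ∈ A.δ q a p → φ r ∈ B.δ (φ q) a (p.map (Option.map φ))) :
    B.Reachable w (φ q) := by
  obtain ⟨f, hf⟩ := h
  have hrun := hf.map φ hδ
  simp only [initConfig, hinit, Option.map_none] at hrun
  exact ⟨_, hrun⟩

theorem Weak.mem_lang_iff {A : NDCMA l Q S} (hA : A.Weak) {w : List (S × ND l)} :
    w ∈ A.Lang ↔ ∃ q ∈ A.FG, A.Reachable w q := by
  constructor
  · rintro ⟨q, f, hrun, hq, -⟩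
    exact ⟨q, hq, f, hrun⟩
  · rintro ⟨q, hq, f, hrun⟩
    exact ⟨q, f, hrun, hq, fun _ s _ => hA ▸ Set.mem_univ s⟩

def Complete (A : NDCMA l Q S) : Prop := ∀ q a p, (A.δ q a p).Nonempty

theorem Complete.exists_run {A : NDCMA l Q S} (hA : A.Complete)
    (c : Q × (ND l → Option Q)) (w : List (S × ND l)) : ∃ c', A.Run c w c' := by
  induction w generalizing c with
  | nil => exact ⟨c, Run.nil c⟩
  | cons x w ih =>
    obtain ⟨q', hq'⟩ := hA c.1 x.1 (profile c.2 x.2)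
    obtain ⟨c', hc'⟩ := ih (q', fun e => if e.1 <+: x.2.1 then some q' else c.2 e)
    refine ⟨c', Run.cons ⟨hq', ?_, ?_⟩ hc'⟩
    · intro e he; simp [he]
    · intro e he; simp [he]

theorem Complete.exists_reachable {A : NDCMA l Q S} (hA : A.Complete) (w : List (S × ND l)) :
    ∃ q, A.Reachable w q :=
  let ⟨c, hc⟩ := hA.exists_run A.initConfig w
  ⟨c.1, c.2, hc⟩

section Relabel

variable {A : NDCMA l Q S} (e : Q ≃ Q')

def relabel (A : NDCMA l Q S) (e : Q ≃ Q') : NDCMA l Q' S where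
  init := e A.init
  δ q a p := e '' A.δ (e.symm q) a (p.map (Option.map e.symm))
  FL := e '' A.FL
  FG := e '' A.FG
  sub := Set.image_mono A.sub

theorem Weak.relabel (hA : A.Weak) : (A.relabel e).Weak := by
  change e '' A.FL = Set.univ
  rw [hA, Set.image_univ_of_surjective e.surjective]

theorem reachable_relabel_iff {w : List (S × ND l)} {q : Q'} :
    (A.relabel e).Reachable w q ↔ A.Reachable w (e.symm q) := by
  constructor
  · refine fun h => h.map e.symm (e.symm_apply_apply _) fun q a p r hr => ?_
    obtain ⟨r, hr, rfl⟩ := hr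
    simpa using hr
  · intro h
    have hrun := h.map (B := A.relabel e) e rfl fun q a p r hr => by
      simpa [relabel, List.map_map, Function.comp_def] using hr
    simpa using hrun

theorem Weak.lang_relabel (hA : A.Weak) : (A.relabel e).Lang = A.Lang := by
  ext w
  rw [(hA.relabel e).mem_lang_iff, hA.mem_lang_iff]
  exact Set.exists_mem_image.trans (by simp only [reachable_relabel_iff, e.symm_apply_apply])

theorem Weak.exists_fin_lang_eq [Finite Q] (hA : A.Weak) :
    ∃ (k : ℕ) (B : NDCMA l (Fin k) S), B.Weak ∧ B.Lang = A.Lang :=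
  ⟨_, A.relabel (Finite.equivFin Q), hA.relabel _, hA.lang_relabel _⟩

end Relabel

section AddSink

variable {A : NDCMA l Q S}

/-- `Option.join` reads class memory written in the sink as empty; the sink is absorbing, so `A`
never sees it. -/
def addSink (A : NDCMA l Q S) : NDCMA l (Option Q) S where
  init := some A.init
  δ p a prof :=
    match p with
    | none => {none}
    | some q => insert none (some '' A.δ q a (prof.map Option.join))
  FL := insert none (some '' A.FL)
  FG := some '' A.FG
  sub := (Set.image_mono A.sub).trans (Set.subset_insert _ _)

theorem addSink_complete : A.addSink.Complete := by
  intro p a prof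
  cases p <;> simp [addSink]

theorem Weak.addSink (hA : A.Weak) : A.addSink.Weak := by
  change insert none (some '' A.FL) = Set.univ
  rw [hA, Set.image_univ, Set.insert_none_range_some]

theorem reachable_addSink_some_iff {w : List (S × ND l)} {q : Q} :
    A.addSink.Reachable w (some q) ↔ A.Reachable w q := by
  constructor
  · rintro ⟨F, hF⟩
    obtain ⟨q₀, hq₀, hrun⟩ := hF.pmap (B := A) id (fun p a prof r r' hr hr' => by
      subst hr'
      cases p with
      | none => simp [addSink] at hr
      | some p =>
        have hr : r' ∈ A.δ p a (prof.map Option.join) := by simpa [addSink] using hr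
        exact ⟨p, rfl, hr⟩) rfl
    cases Option.some.inj hq₀
    exact ⟨_, hrun⟩
  · intro h
    have hjoin : Option.join ∘ Option.map some = (id : Option Q → Option Q) :=
      funext fun o => by cases o <;> rfl
    refine h.map some rfl fun q a p r hr => ?_
    change some r ∈ insert none (some '' A.δ q a ((p.map (Option.map some)).map Option.join))
    rw [List.map_map, hjoin, List.map_id]
    exact Set.mem_insert_of_mem _ ⟨r, hr, rfl⟩

theorem Weak.lang_addSink (hA : A.Weak) : A.addSink.Lang = A.Lang := by
  ext w
  rw [hA.addSink.mem_lang_iff, hA.mem_lang_iff]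
  exact Set.exists_mem_image.trans (by simp only [reachable_addSink_some_iff])

end AddSink

section Prod

variable {A₁ : NDCMA l Q₁ S} {A₂ : NDCMA l Q₂ S}

/-- Only weak automata are multiplied, so local acceptance is dropped. -/
def prod (A₁ : NDCMA l Q₁ S) (A₂ : NDCMA l Q₂ S) (G : Set (Q₁ × Q₂)) :
    NDCMA l (Q₁ × Q₂) S where
  init := (A₁.init, A₂.init)
  δ q a p := A₁.δ q.1 a (p.map (Option.map Prod.fst)) ×ˢ A₂.δ q.2 a (p.map (Option.map Prod.snd))
  FL := Set.univ
  FG := G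
  sub := Set.subset_univ G

theorem prod_weak (A₁ : NDCMA l Q₁ S) (A₂ : NDCMA l Q₂ S) (G : Set (Q₁ × Q₂)) :
    (prod A₁ A₂ G).Weak := rfl

def pairMem (f₁ : ND l → Option Q₁) (f₂ : ND l → Option Q₂) (d : ND l) : Option (Q₁ × Q₂) :=
  Option.map₂ Prod.mk (f₁ d) (f₂ d)

theorem map_fst_pairMem {f₁ : ND l → Option Q₁} {f₂ : ND l → Option Q₂} {d : ND l}
    (hs : (f₁ d).isSome = (f₂ d).isSome) : (pairMem f₁ f₂ d).map Prod.fst = f₁ d := by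
  unfold pairMem
  revert hs
  cases f₁ d <;> cases f₂ d <;> simp

theorem map_snd_pairMem {f₁ : ND l → Option Q₁} {f₂ : ND l → Option Q₂} {d : ND l}
    (hs : (f₁ d).isSome = (f₂ d).isSome) : (pairMem f₁ f₂ d).map Prod.snd = f₂ d := by
  unfold pairMem
  revert hs
  cases f₁ d <;> cases f₂ d <;> simp

theorem Step.isSome_eq_isSome {c₁ c₁' : Q₁ × (ND l → Option Q₁)}
    {c₂ c₂' : Q₂ × (ND l → Option Q₂)} {x : S × ND l}
    (h₁ : A₁.Step c₁ x c₁') (h₂ : A₂.Step c₂ x c₂')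
    (hs : ∀ d, (c₁.2 d).isSome = (c₂.2 d).isSome) (d : ND l) :
    (c₁'.2 d).isSome = (c₂'.2 d).isSome := by
  by_cases hd : d.1 <+: x.2.1
  · simp [h₁.2.1 d hd, h₂.2.1 d hd]
  · rw [h₁.2.2 d hd, h₂.2.2 d hd, hs d]

theorem Step.prod (G : Set (Q₁ × Q₂)) {c₁ c₁' : Q₁ × (ND l → Option Q₁)}
    {c₂ c₂' : Q₂ × (ND l → Option Q₂)} {x : S × ND l}
    (h₁ : A₁.Step c₁ x c₁') (h₂ : A₂.Step c₂ x c₂')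
    (hs : ∀ d, (c₁.2 d).isSome = (c₂.2 d).isSome) :
    (prod A₁ A₂ G).Step ((c₁.1, c₂.1), pairMem c₁.2 c₂.2) x
      ((c₁'.1, c₂'.1), pairMem c₁'.2 c₂'.2) := by
  obtain ⟨hδ₁, hpre₁, hrest₁⟩ := h₁
  obtain ⟨hδ₂, hpre₂, hrest₂⟩ := h₂
  have hfst : (fun e => (pairMem c₁.2 c₂.2 e).map Prod.fst) = c₁.2 :=
    funext fun e => map_fst_pairMem (hs e)
  have hsnd : (fun e => (pairMem c₁.2 c₂.2 e).map Prod.snd) = c₂.2 :=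
    funext fun e => map_snd_pairMem (hs e)
  refine ⟨⟨?_, ?_⟩, fun e he => ?_, fun e he => ?_⟩
  · rw [← profile_comp, hfst]; exact hδ₁
  · rw [← profile_comp, hsnd]; exact hδ₂
  · simp [pairMem, hpre₁ e he, hpre₂ e he]
  · simp [pairMem, hrest₁ e he, hrest₂ e he]

theorem Run.prod (G : Set (Q₁ × Q₂)) {c₁ c₁' : Q₁ × (ND l → Option Q₁)}
    {c₂ c₂' : Q₂ × (ND l → Option Q₂)} {w : List (S × ND l)}
    (h₁ : A₁.Run c₁ w c₁') (h₂ : A₂.Run c₂ w c₂')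
    (hs : ∀ d, (c₁.2 d).isSome = (c₂.2 d).isSome) :
    (prod A₁ A₂ G).Run ((c₁.1, c₂.1), pairMem c₁.2 c₂.2) w
      ((c₁'.1, c₂'.1), pairMem c₁'.2 c₂'.2) := by
  induction h₁ generalizing c₂ with
  | nil => cases h₂; exact Run.nil _
  | cons s₁ _ ih =>
    cases h₂ with
    | cons s₂ r₂ => exact Run.cons (s₁.prod G s₂ hs) (ih r₂ (s₁.isSome_eq_isSome s₂ hs))

theorem reachable_prod_iff {G : Set (Q₁ × Q₂)} {w : List (S × ND l)} {q : Q₁ × Q₂} :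
    (prod A₁ A₂ G).Reachable w q ↔ A₁.Reachable w q.1 ∧ A₂.Reachable w q.2 := by
  constructor
  · intro h
    exact ⟨h.map (B := A₁) Prod.fst rfl fun _ _ _ _ hr => hr.1,
      h.map (B := A₂) Prod.snd rfl fun _ _ _ _ hr => hr.2⟩
  · rintro ⟨⟨f₁, h₁⟩, ⟨f₂, h₂⟩⟩
    exact ⟨_, h₁.prod G h₂ fun _ => rfl⟩

theorem lang_prod_inter (h₁ : A₁.Weak) (h₂ : A₂.Weak) :
    (prod A₁ A₂ (A₁.FG ×ˢ A₂.FG)).Lang = A₁.Lang ∩ A₂.Lang := by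
  ext w
  rw [Set.mem_inter_iff, (prod_weak _ _ _).mem_lang_iff, h₁.mem_lang_iff, h₂.mem_lang_iff]
  simp only [reachable_prod_iff]
  exact ⟨fun ⟨q, ⟨hq₁, hq₂⟩, hr₁, hr₂⟩ => ⟨⟨q.1, hq₁, hr₁⟩, q.2, hq₂, hr₂⟩,
    fun ⟨⟨q₁, hq₁, hr₁⟩, q₂, hq₂, hr₂⟩ => ⟨(q₁, q₂), ⟨hq₁, hq₂⟩, hr₁, hr₂⟩⟩

theorem lang_prod_union (h₁ : A₁.Weak) (h₂ : A₂.Weak) (hc₁ : A₁.Complete) (hc₂ : A₂.Complete) :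
    (prod A₁ A₂ {q | q.1 ∈ A₁.FG ∨ q.2 ∈ A₂.FG}).Lang = A₁.Lang ∪ A₂.Lang := by
  ext w
  rw [Set.mem_union, (prod_weak _ _ _).mem_lang_iff, h₁.mem_lang_iff, h₂.mem_lang_iff]
  simp only [reachable_prod_iff]
  constructor
  · rintro ⟨q, hq | hq, hr₁, hr₂⟩
    exacts [Or.inl ⟨q.1, hq, hr₁⟩, Or.inr ⟨q.2, hq, hr₂⟩]
  · rintro (⟨q₁, hq₁, hr₁⟩ | ⟨q₂, hq₂, hr₂⟩)
    · obtain ⟨q₂, hr₂⟩ := hc₂.exists_reachable w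
      exact ⟨(q₁, q₂), Or.inl hq₁, hr₁, hr₂⟩
    · obtain ⟨q₁, hr₁⟩ := hc₁.exists_reachable w
      exact ⟨(q₁, q₂), Or.inr hq₂, hr₁, hr₂⟩

end Prod

end NDCMA

theorem weak_ndcma_inter_union_general (l : ℕ) (S : Type)
    (n m : ℕ) (A₁ : NDCMA l (Fin n) S) (A₂ : NDCMA l (Fin m) S)
    (h₁ : A₁.Weak) (h₂ : A₂.Weak) :
    (∃ (k : ℕ) (B : NDCMA l (Fin k) S), B.Weak ∧ B.Lang = A₁.Lang ∩ A₂.Lang) ∧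
    (∃ (k : ℕ) (B : NDCMA l (Fin k) S), B.Weak ∧ B.Lang = A₁.Lang ∪ A₂.Lang) := by
  constructor
  · obtain ⟨k, B, hB, hL⟩ := (NDCMA.prod_weak A₁ A₂ (A₁.FG ×ˢ A₂.FG)).exists_fin_lang_eq
    exact ⟨k, B, hB, hL.trans (NDCMA.lang_prod_inter h₁ h₂)⟩
  · obtain ⟨k, B, hB, hL⟩ := (NDCMA.prod_weak A₁.addSink A₂.addSink
      {q | q.1 ∈ A₁.addSink.FG ∨ q.2 ∈ A₂.addSink.FG}).exists_fin_lang_eq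
    refine ⟨k, B, hB, ?_⟩
    rw [hL, NDCMA.lang_prod_union h₁.addSink h₂.addSink NDCMA.addSink_complete
      NDCMA.addSink_complete, h₁.lang_addSink, h₂.lang_addSink]

/-- The class of data languages recognized by weak nested data class memory
automata of level `l` is closed under intersection and union. -/
theorem weak_ndcma_inter_union (l : ℕ) (S : Type) [Finite S]
    (n m : ℕ) (A₁ : NDCMA l (Fin n) S) (A₂ : NDCMA l (Fin m) S)
    (h₁ : A₁.Weak) (h₂ : A₂.Weak) :
    (∃ (k : ℕ) (B : NDCMA l (Fin k) S), B.Weak ∧ B.Lang = A₁.Lang ∩ A₂.Lang) ∧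
    (∃ (k : ℕ) (B : NDCMA l (Fin k) S), B.Weak ∧ B.Lang = A₁.Lang ∪ A₂.Lang) :=
  weak_ndcma_inter_union_general l S n m A₁ A₂ h₁ h₂
end

section
/- In any reachable configuration (q, m₁, …, m_k) of a level-k HOMCA', there is a unique index 0 ≤ i ≤ k such that m_j = ⊥ for all j ≤ i and m_j ≠ ⊥ for all j > i. -/
/-- `MS A j` is the type of level-`j` multisets over `A` (with `MS A 0 = A`):
a level-1 multiset is a finite multiset over `A`, and a level-`(j+1)` multiset is a
finite multiset of level-`j` multisets. -/
def MS (A : Type) : ℕ → Type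
  | 0 => A
  | n + 1 => Multiset (MS A n)

/-- The counter part of a configuration of a level-`k` HOMCA: for each `j ∈ [1,k]`,
either `⊥` or a level-`j` multiset (index `j - 1 : Fin k` holds `m_j`). -/
abbrev Mvec (A : Type) (k : ℕ) := (j : Fin k) → Option (MS A (j.1 + 1))

/-- The counter operations of a level-`k` higher-order multicounter automaton.
`new j`, `store j` and `load j` refer to the counter at index `j` (i.e. `m_{j+1}`). -/
inductive HOp (A : Type) (k : ℕ)
  | new (j : Fin k)
  | inc (a : A)
  | dec (a : A)
  | store (j : Fin k)
  | load (j : Fin k)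

/-- The semantics of counter operations, with the additional enabling conditions of
HOMCA': `store_i` is enabled only when `m_1 = … = m_{i-1} = ⊥`, and `new_i` only when
`m_k, …, m_{i+1} ≠ ⊥` and `m_{i-1} = … = m_1 = ⊥` (as always, `load_i` only when
`m_1, …, m_i` are all `⊥`). -/
inductive OpStep (A : Type) (k : ℕ) : HOp A k → Mvec A k → Mvec A k → Prop
  | new (j : Fin k) (m : Mvec A k) (h : m j = none)
      (hhi : ∀ j' : Fin k, j < j' → m j' ≠ none)
      (hlo : ∀ j' : Fin k, j' < j → m j' = none) :
      OpStep A k (.new j) m (Function.update m j (some ((0 : Multiset (MS A j.1)) : MS A (j.1 + 1))))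
  | inc (hk : 0 < k) (a : A) (m : Mvec A k) (m1 : Multiset A)
      (h : m ⟨0, hk⟩ = some m1) :
      OpStep A k (.inc a) m (Function.update m ⟨0, hk⟩ (some (a ::ₘ m1)))
  | dec (hk : 0 < k) (a : A) (m : Mvec A k) (m1 : Multiset A)
      (h : m ⟨0, hk⟩ = some (a ::ₘ m1)) :
      OpStep A k (.dec a) m (Function.update m ⟨0, hk⟩ (some m1))
  | store (j : Fin k) (hj : j.1 + 1 < k) (m : Mvec A k)
      (v : MS A (j.1 + 1)) (w : Multiset (MS A (j.1 + 1)))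
      (hv : m j = some v) (hw : m ⟨j.1 + 1, hj⟩ = some w)
      (hen : ∀ j' : Fin k, j' < j → m j' = none) :
      OpStep A k (.store j)
        m (Function.update (Function.update m ⟨j.1 + 1, hj⟩ (some (v ::ₘ w))) j none)
  | load (j : Fin k) (hj : j.1 + 1 < k) (m : Mvec A k)
      (v : MS A (j.1 + 1)) (w : Multiset (MS A (j.1 + 1)))
      (hm : m ⟨j.1 + 1, hj⟩ = some (v ::ₘ w))
      (hen : ∀ j' : Fin k, j' ≤ j → m j' = none) :
      OpStep A k (.load j)
        m (Function.update (Function.update m ⟨j.1 + 1, hj⟩ (some w)) j (some v))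

/-- A level-`k` HOMCA' with state set `Q`, input alphabet `S` and multiset alphabet `A`. -/
structure HOMCAp (Q S A : Type) (k : ℕ) where
  init : Q
  Δ : Set (Q × S × HOp A k × Q)
  F : Set Q

/-- One step between configurations of a HOMCA'. -/
def HOMCAp.CStep {Q S A : Type} {k : ℕ} (M : HOMCAp Q S A k)
    (c c' : Q × Mvec A k) : Prop :=
  ∃ a op, (c.1, a, op, c'.1) ∈ M.Δ ∧ OpStep A k op c.2 c'.2

/-! The invariant is `IsNonePrefix`. The initial vector satisfies it with index `k`, and
every HOMCA' operation preserves it with a new index: the enabling conditions force the old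
index to be the position the operation touches (`j` before `store_j`, `j + 1` before `load_j`
and `new_j`, `0` before `inc` and `dec`, which need `m₁ ≠ ⊥`), and the update then moves the
boundary by at most one. -/

open Function

section NonePrefix

variable {k : ℕ} {β : Fin k → Type*}

def IsNonePrefix (m : (j : Fin k) → Option (β j)) (i : ℕ) : Prop :=
  i ≤ k ∧ ∀ j : Fin k, m j = none ↔ j.1 < i

variable {m : (j : Fin k) → Option (β j)} {i : ℕ}

theorem isNonePrefix_iff :
    IsNonePrefix m i ↔ i ≤ k ∧ (∀ j : Fin k, j.1 + 1 ≤ i → m j = none) ∧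
      (∀ j : Fin k, i < j.1 + 1 → m j ≠ none) := by
  refine and_congr_right fun _ => ⟨fun h => ⟨fun j hj => (h j).2 hj, fun j hj => ?_⟩,
    fun ⟨hlo, hhi⟩ j => ⟨fun hj => ?_, hlo j⟩⟩
  · exact fun hj' => absurd ((h j).1 hj') (by omega)
  · by_contra hji
    exact hhi j (by omega) hj

theorem isNonePrefix_const_none : IsNonePrefix (fun _ => none : (j : Fin k) → Option (β j)) k :=
  ⟨le_rfl, fun j => iff_of_true rfl j.2⟩

namespace IsNonePrefix

theorem le_of_ne_none (h : IsNonePrefix m i) {j : Fin k} (hj : m j ≠ none) : i ≤ j.1 :=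
  not_lt.1 fun hji => hj ((h.2 j).2 hji)

theorem lt_of_eq_none (h : IsNonePrefix m i) {j : Fin k} (hj : m j = none) : j.1 < i :=
  (h.2 j).1 hj

theorem le {i' : ℕ} (h : IsNonePrefix m i) (h' : IsNonePrefix m i') : i ≤ i' := by
  by_contra! hlt
  have hi'k : i' < k := hlt.trans_le h.1
  exact lt_irrefl i' (h'.lt_of_eq_none ((h.2 ⟨i', hi'k⟩).2 hlt))

theorem unique {i' : ℕ} (h : IsNonePrefix m i) (h' : IsNonePrefix m i') : i = i' :=
  le_antisymm (h.le h') (h'.le h)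

theorem update_some (h : IsNonePrefix m i) {j : Fin k} (hij : i ≤ j.1) (x : β j) :
    IsNonePrefix (update m j (some x)) i := by
  refine ⟨h.1, fun j' => ?_⟩
  rcases eq_or_ne j' j with rfl | hne
  · simp only [update_self, reduceCtorEq, false_iff]
    omega
  · rw [update_of_ne hne, h.2]

theorem update_some_of_succ {j : Fin k} (h : IsNonePrefix m (j.1 + 1)) (x : β j) :
    IsNonePrefix (update m j (some x)) j.1 := by
  refine ⟨j.2.le, fun j' => ?_⟩
  rcases eq_or_ne j' j with rfl | hne
  · simp
  · rw [update_of_ne hne, h.2, Nat.lt_succ_iff_lt_or_eq, Fin.val_eq_val, or_iff_left hne]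

theorem update_none_succ {j : Fin k} (h : IsNonePrefix m j.1) :
    IsNonePrefix (update m j none) (j.1 + 1) := by
  refine ⟨j.2, fun j' => ?_⟩
  rcases eq_or_ne j' j with rfl | hne
  · simp
  · rw [update_of_ne hne, h.2, Nat.lt_succ_iff_lt_or_eq, Fin.val_eq_val, or_iff_left hne]

end IsNonePrefix

end NonePrefix

theorem OpStep.exists_isNonePrefix {A : Type} {k : ℕ} {op : HOp A k} {m m' : Mvec A k}
    (hs : OpStep A k op m m') {i : ℕ} (h : IsNonePrefix m i) : ∃ i', IsNonePrefix m' i' := by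
  cases hs with
  | new j m hj hhi hlo =>
    refine ⟨j.1, IsNonePrefix.update_some_of_succ ⟨j.2, fun j' => ?_⟩ _⟩
    rcases lt_trichotomy j' j with hlt | rfl | hgt
    · exact iff_of_true (hlo j' hlt) (by omega)
    · exact iff_of_true hj (by omega)
    · exact iff_of_false (hhi j' hgt) (by omega)
  | inc hk a m m₁ hm | dec hk a m m₁ hm =>
    exact ⟨i, h.update_some (h.le_of_ne_none (hm ▸ Option.some_ne_none _)) _⟩
  | store j hj m v w hv _ hen =>
    obtain rfl : i = j.1 := by
      refine le_antisymm (h.le_of_ne_none (hv ▸ Option.some_ne_none _)) (not_lt.1 fun hij => ?_)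
      exact lt_irrefl i (h.lt_of_eq_none (hen ⟨i, hij.trans j.2⟩ hij))
    exact ⟨_, (h.update_some (j := ⟨j.1 + 1, hj⟩) (Nat.le_succ _) _).update_none_succ⟩
  | load j hj m v w hm hen =>
    obtain rfl : i = j.1 + 1 :=
      le_antisymm (h.le_of_ne_none (j := ⟨j.1 + 1, hj⟩) (hm ▸ Option.some_ne_none _))
        (h.lt_of_eq_none (hen j le_rfl))
    exact ⟨_, (h.update_some (j := ⟨j.1 + 1, hj⟩) le_rfl _).update_some_of_succ _⟩

theorem HOMCAp.exists_isNonePrefix_of_reachable {Q S A : Type} {k : ℕ} (M : HOMCAp Q S A k)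
    {c : Q × Mvec A k} (h : Relation.ReflTransGen M.CStep (M.init, fun _ => none) c) :
    ∃ i, IsNonePrefix c.2 i := by
  induction h with
  | refl => exact ⟨k, isNonePrefix_const_none⟩
  | tail _ hstep ih =>
    obtain ⟨_, _, _, hop⟩ := hstep
    obtain ⟨i, hi⟩ := ih
    exact hop.exists_isNonePrefix hi

/-- In any reachable configuration `(q, m₁, …, m_k)` of a level-`k` HOMCA',
there is a unique index `0 ≤ i ≤ k` such that `m_j = ⊥` for all `j ≤ i` and `m_j ≠ ⊥`
for all `j > i`. -/
theorem homcap_reachable_shape (Q S A : Type) (k : ℕ) (M : HOMCAp Q S A k)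
    (q : Q) (m : Mvec A k)
    (h : Relation.ReflTransGen M.CStep (M.init, fun _ => none) (q, m)) :
    ∃! i : ℕ, i ≤ k ∧ (∀ j : Fin k, j.1 + 1 ≤ i → m j = none) ∧
      (∀ j : Fin k, i < j.1 + 1 → m j ≠ none) := by
  obtain ⟨i, hi⟩ := M.exists_isNonePrefix_of_reachable h
  exact ⟨i, isNonePrefix_iff.1 hi, fun i' hi' => (isNonePrefix_iff.2 hi').unique hi⟩
end
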